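/- Let P be a locally finite partially ordered set, x < y in P, and Q, Q' ⊆ P subsets complementing the interval [x,y]_P. Let m be an [x,y]_Q-admissible monomial such that the monomial m^{−1} · t_y/t_x is [x,y]_{Q'}-admissible. Then the coefficient of m in Inv_Q θ (x,y) equals the negative of the coefficient of m^{−1} · t_y/t_x in Inv_{Q'} θ (x,y). -/

import Mathlib

/-! Twisting an incidence-algebra element by `ε(u,v) ↦ (t_v/t_u) · ε(u,v)|_{t ↦ t⁻¹}` is
multiplicative, so it carries `Inv_{Q'} θ` to `Inv_{Q'}` of the twist of `θ`, and the twist of `θ`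
is its inverse `θ⁻¹(u,v) = Σ_{u ≤ a ≤ v} μ(a,v) t_v/t_a`. The theorem therefore reduces to a fact
about any unitriangular `ε` with inverse `η`: if `Q, Q'` complement `[x,y]`, then
`Inv_Q ε (x,y) = - Inv_{Q'} η (x,y)`. To see it, let `F = Inv_Q ε` and `r = ε · (1_Q F(·,y))`.
Then `r = e_y` on `Q` and `η r = 1_Q F(·,y)`; since `[x,y] \ Q'` lies in `Q \ {y}`, the vector
`r - F(x,y) e_x` solves the column equation of `Inv_{Q'} η` on `[x,y]_{Q'}`, and its value at `x`
is `-F(x,y)`. -/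

open Finset
open scoped Classical

variable {P A : Type*}

/-- The zeta function of a poset, as an element of its incidence algebra. -/
noncomputable def zeta [PartialOrder P] [CommRing A] : P → P → A :=
  fun x y => if x ≤ y then 1 else 0

/-- `IsInvOn Q ε η` says that `η` represents the inverse `Inv_Q ε` of the restriction
`ε|_{Q×Q}` of `ε` in the incidence algebra `I_A(Q)` of the subposet `Q ⊆ P`.
Elements of `I_A(Q)` are encoded as functions `P → P → A` supported on pairs
`x ≤ y` with `x, y ∈ Q`; convolution over `Q` is the sum over `z ∈ [x,y]_Q`,
and the unit of `I_A(Q)` is the Kronecker delta on `Q`. -/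
noncomputable def IsInvOn [PartialOrder P] [LocallyFiniteOrder P] [CommRing A]
    (Q : Set P) (ε η : P → P → A) : Prop :=
  (∀ x y, ¬(x ∈ Q ∧ y ∈ Q ∧ x ≤ y) → η x y = 0) ∧
  (∀ x ∈ Q, ∀ y ∈ Q,
    ∑ z ∈ (Finset.Icc x y).filter (· ∈ Q), ε x z * η z y = if x = y then 1 else 0) ∧
  (∀ x ∈ Q, ∀ y ∈ Q,
    ∑ z ∈ (Finset.Icc x y).filter (· ∈ Q), η x z * ε z y = if x = y then 1 else 0)

/-- The Laurent polynomial algebra `A_P = ℚ[t_x^{±1} : x ∈ P]`, realized as the monoid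
algebra of `ℚ` over the additive group of finitely supported exponent vectors `P →₀ ℤ`. -/
abbrev AP (P : Type*) : Type _ := AddMonoidAlgebra ℚ (P →₀ ℤ)

/-- The exponent vector of the variable `t_x`. -/
noncomputable def tv (x : P) : P →₀ ℤ := Finsupp.single x 1

/-- The element `θ(x,y) = Σ_{x ≤ z ≤ y} μ(z,y) · t_z/t_x` of `I_{A_P}(P)`,
where `mob` is the Möbius function of `P`. -/
noncomputable def theta [PartialOrder P] [LocallyFiniteOrder P]
    (mob : P → P → ℚ) (x y : P) : AP P :=
  ∑ z ∈ Finset.Icc x y, mob z y • AddMonoidAlgebra.single (tv z - tv x) (1 : ℚ)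

/-- `AdmissibleExp R y M` says that `M` is the exponent vector of an `R`-admissible monomial
`Π_{i<k} t_{w_i}/t_{z_i}` (for the interval ending at `y`): there are `z : Fin (k+1) → P`
with `z_k = y`, all `z_i ∈ R`, and `w : Fin k → P` with
`z₁ ≤ w₁ ≤ z₂ ≤ ⋯ ≤ z_k ≤ w_k ≤ y`, such that `M = Σ_i (tv (w i) - tv (z i))`. -/
def AdmissibleExp [PartialOrder P] (R : Set P) (y : P) (M : P →₀ ℤ) : Prop :=
  ∃ (k : ℕ) (z : Fin (k+1) → P) (w : Fin k → P),
    z (Fin.last k) = y ∧ (∀ i : Fin k, z i.castSucc ∈ R) ∧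
    (∀ i : Fin k, z i.castSucc ≤ w i) ∧ (∀ i : Fin k, w i ≤ z i.succ) ∧
    M = ∑ i : Fin k, (tv (w i) - tv (z i.castSucc))

section IntervalSums

variable {M : Type*} [AddCommMonoid M] [PartialOrder P] [LocallyFiniteOrder P]

theorem sum_filter_Icc_sum_filter_Icc_comm (p q : P → Prop) [DecidablePred p] [DecidablePred q]
    (f : P → P → M) (x y : P) :
    ∑ u ∈ (Icc x y).filter p, ∑ z ∈ (Icc u y).filter q, f u z
      = ∑ z ∈ (Icc x y).filter q, ∑ u ∈ (Icc x z).filter p, f u z := by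
  refine Finset.sum_comm' fun u z => ?_
  simp only [Finset.mem_filter, Finset.mem_Icc]
  exact ⟨fun ⟨⟨⟨hxu, _⟩, hp⟩, ⟨huz, hzy⟩, hq⟩ => ⟨⟨⟨hxu, huz⟩, hp⟩, ⟨hxu.trans huz, hzy⟩, hq⟩,
    fun ⟨⟨⟨hxu, huz⟩, hp⟩, ⟨_, hzy⟩, hq⟩ => ⟨⟨⟨hxu, huz.trans hzy⟩, hp⟩, ⟨huz, hzy⟩, hq⟩⟩

theorem sum_Icc_sum_Icc_comm (f : P → P → M) (x y : P) :
    ∑ u ∈ Icc x y, ∑ z ∈ Icc u y, f u z = ∑ z ∈ Icc x y, ∑ u ∈ Icc x z, f u z := by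
  simpa only [Finset.filter_true] using
    sum_filter_Icc_sum_filter_Icc_comm (fun _ => True) (fun _ => True) f x y

end IntervalSums

section Complement

variable [CommRing A] [PartialOrder P] [LocallyFiniteOrder P]

theorem sum_mul_sum_filter_mul {ε η : P → P → A}
    (hηε : ∀ u v, u ≤ v → ∑ z ∈ Icc u v, η u z * ε z v = if u = v then 1 else 0)
    (Q : Set P) (g : P → A) {u y : P} (huy : u ≤ y) :
    ∑ z ∈ Icc u y, η u z * ∑ w ∈ (Icc z y).filter (· ∈ Q), ε z w * g w
      = if u ∈ Q then g u else 0 := by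
  calc ∑ z ∈ Icc u y, η u z * ∑ w ∈ (Icc z y).filter (· ∈ Q), ε z w * g w
      = ∑ w ∈ (Icc u y).filter (· ∈ Q), ∑ z ∈ Icc u w, η u z * (ε z w * g w) := by
        simp_rw [Finset.mul_sum]
        simpa only [Finset.filter_true] using
          sum_filter_Icc_sum_filter_Icc_comm (fun _ => True) (· ∈ Q)
            (fun z w => η u z * (ε z w * g w)) u y
    _ = ∑ w ∈ (Icc u y).filter (· ∈ Q), (if u = w then 1 else 0) * g w := by
        refine Finset.sum_congr rfl fun w hw => ?_
        simp_rw [← mul_assoc, ← Finset.sum_mul]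
        rw [hηε u w (Finset.mem_Icc.1 (Finset.mem_filter.1 hw).1).1]
    _ = if u ∈ Q then g u else 0 := by
        simp [Finset.sum_ite_eq, huy]

theorem IsInvOn.apply_eq_of_sum_mul_eq {S : Set P} {η G : P → P → A} (hG : IsInvOn S η G)
    {g : P → A} {x y : P} (hx : x ∈ S) (hy : y ∈ S) (hxy : x ≤ y)
    (hg : ∀ u ∈ S, x ≤ u → u ≤ y →
      ∑ z ∈ (Icc u y).filter (· ∈ S), η u z * g z = if u = y then 1 else 0) :
    G x y = g x := by
  calc G x y = ∑ u ∈ (Icc x y).filter (· ∈ S), G x u * (if u = y then 1 else 0) := by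
        simp [hy, hxy]
    _ = ∑ u ∈ (Icc x y).filter (· ∈ S), G x u * ∑ z ∈ (Icc u y).filter (· ∈ S), η u z * g z := by
        refine Finset.sum_congr rfl fun u hu => ?_
        simp only [Finset.mem_filter, Finset.mem_Icc] at hu
        rw [hg u hu.2 hu.1.1 hu.1.2]
    _ = ∑ z ∈ (Icc x y).filter (· ∈ S), (∑ u ∈ (Icc x z).filter (· ∈ S), G x u * η u z) * g z := by
        simp_rw [Finset.mul_sum, Finset.sum_mul, mul_assoc]
        exact sum_filter_Icc_sum_filter_Icc_comm _ _ _ x y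
    _ = ∑ z ∈ (Icc x y).filter (· ∈ S), (if x = z then 1 else 0) * g z := by
        refine Finset.sum_congr rfl fun z hz => ?_
        rw [hG.2.2 x hx z (Finset.mem_filter.1 hz).2]
    _ = g x := by
        simp [hx, hxy]

theorem IsInvOn.apply_eq_neg_of_complement {ε η F G : P → P → A} {Q Q' : Set P} {x y : P}
    (hF : IsInvOn Q ε F) (hG : IsInvOn Q' η G) (hη : ∀ u, η u u = 1)
    (hηε : ∀ u v, u ≤ v → ∑ z ∈ Icc u v, η u z * ε z v = if u = v then 1 else 0)
    (hxy : x < y) (hxQ : x ∈ Q) (hyQ : y ∈ Q) (hxQ' : x ∈ Q') (hyQ' : y ∈ Q')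
    (hcompl : ∀ z : P, x < z → z < y → ((z ∈ Q) ↔ ¬ (z ∈ Q'))) :
    F x y = -G x y := by
  set r : P → A := fun u => ∑ w ∈ (Icc u y).filter (· ∈ Q), ε u w * F w y
  have hrQ : ∀ u ∈ Q, r u = if u = y then 1 else 0 := fun u hu => hF.2.1 u hu y hyQ
  have hFyy : F y y = 1 := by
    have hεyy : ε y y = 1 := by simpa [hη] using hηε y y le_rfl
    simpa [hεyy, hyQ, Finset.filter_singleton] using hF.2.1 y hyQ y hyQ
  have hηr : ∀ u, x ≤ u → u ≤ y →
      ∑ z ∈ (Icc u y).filter (· ∈ Q'), η u z * r z = if u ∈ Q then F u y else 0 := by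
    intro u hxu huy
    rw [← sum_mul_sum_filter_mul hηε Q (F · y) huy,
      ← Finset.sum_filter_add_sum_filter_not (Icc u y) (· ∈ Q'), left_eq_add]
    refine Finset.sum_eq_zero fun z hz => ?_
    simp only [Finset.mem_filter, Finset.mem_Icc] at hz
    show η u z * r z = 0
    have hxz : x < z := lt_of_le_of_ne (hxu.trans hz.1.1) (by rintro rfl; exact hz.2 hxQ')
    have hzy : z < y := lt_of_le_of_ne hz.1.2 (by rintro rfl; exact hz.2 hyQ')
    rw [hrQ z ((hcompl z hxz hzy).2 hz.2), if_neg hzy.ne, mul_zero]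
  have hGx := hG.apply_eq_of_sum_mul_eq (g := fun z => r z - if z = x then F x y else 0)
    hxQ' hyQ' hxy.le fun u hu hxu huy => by
      simp only [mul_sub, Finset.sum_sub_distrib, mul_ite, mul_zero, Finset.sum_ite_eq',
        hηr u hxu huy, Finset.mem_filter, Finset.mem_Icc]
      rcases hxu.eq_or_lt with rfl | hxu
      · simp [hxQ, hu, hη, hxy.ne, hxy.le]
      rcases huy.eq_or_lt with rfl | huy
      · simp [hyQ, hFyy, hxu.not_ge]
      have huQ : u ∉ Q := fun huQ => (hcompl u hxu huy).1 huQ hu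
      simp [huQ, hxu.not_ge, huy.ne]
  rw [hGx, hrQ x hxQ, if_neg hxy.ne]
  simp

end Complement

section Twist

variable {B : Type*} [CommRing A] [CommRing B] (φ : A →+* B) (d : P → Bˣ)

def twist (ε : P → P → A) (u v : P) : B :=
  ↑(d u)⁻¹ * φ (ε u v) * d v

theorem sum_twist_mul_twist (ε η : P → P → A) (s : Finset P) (u v : P) :
    ∑ z ∈ s, twist φ d ε u z * twist φ d η z v = ↑(d u)⁻¹ * φ (∑ z ∈ s, ε u z * η z v) * d v := by
  simp only [twist, map_sum, map_mul, Finset.mul_sum, Finset.sum_mul]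
  refine Finset.sum_congr rfl fun z _ => ?_
  linear_combination (↑(d u)⁻¹ * φ (ε u z) * φ (η z v) * ↑(d v)) * (d z).mul_inv

theorem IsInvOn.map_twist [PartialOrder P] [LocallyFiniteOrder P] {Q : Set P} {ε η : P → P → A}
    (h : IsInvOn Q ε η) : IsInvOn Q (twist φ d ε) (twist φ d η) := by
  have twist_delta : ∀ u v : P,
      ↑(d u)⁻¹ * φ (if u = v then 1 else 0) * ↑(d v) = if u = v then (1 : B) else 0 := by
    intro u v
    split_ifs with huv <;> simp [huv]
  exact ⟨fun u v huv => by simp [twist, h.1 u v huv],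
    fun u hu v hv => by rw [sum_twist_mul_twist, h.2.1 u hu v hv, twist_delta],
    fun u hu v hv => by rw [sum_twist_mul_twist, h.2.2 u hu v hv, twist_delta]⟩

end Twist

section Theta

noncomputable def invertVars (P : Type*) : AP P →+* AP P :=
  (AddMonoidAlgebra.mapDomainRingEquiv ℚ (AddEquiv.neg (P →₀ ℤ))).toRingHom

theorem invertVars_single (c : P →₀ ℤ) (q : ℚ) :
    invertVars P (AddMonoidAlgebra.single c q) = AddMonoidAlgebra.single (-c) q := by
  simp [invertVars]

theorem coeff_invertVars (f : AP P) (c : P →₀ ℤ) : (invertVars P f).coeff c = f.coeff (-c) := by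
  simp [invertVars, AddMonoidAlgebra.coeff_mapDomainRingEquiv]

noncomputable def varUnit (u : P) : (AP P)ˣ where
  val := AddMonoidAlgebra.single (tv u) 1
  inv := AddMonoidAlgebra.single (-tv u) 1
  val_inv := by simp [AddMonoidAlgebra.single_mul_single, AddMonoidAlgebra.one_def]
  inv_val := by simp [AddMonoidAlgebra.single_mul_single, AddMonoidAlgebra.one_def]

variable [PartialOrder P] [LocallyFiniteOrder P] {mob : P → P → ℚ}

theorem sum_Icc_mob_left (hmob : IsInvOn Set.univ zeta mob) (u v : P) :
    ∑ a ∈ Icc u v, mob a v = if u = v then 1 else 0 := by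
  rw [← hmob.2.1 u (Set.mem_univ u) v (Set.mem_univ v)]
  simp only [Set.mem_univ, Finset.filter_true]
  exact Finset.sum_congr rfl fun a ha => by rw [zeta, if_pos (Finset.mem_Icc.1 ha).1, one_mul]

theorem sum_Icc_mob_right (hmob : IsInvOn Set.univ zeta mob) (u v : P) :
    ∑ a ∈ Icc u v, mob u a = if u = v then 1 else 0 := by
  rw [← hmob.2.2 u (Set.mem_univ u) v (Set.mem_univ v)]
  simp only [Set.mem_univ, Finset.filter_true]
  exact Finset.sum_congr rfl fun a ha => by rw [zeta, if_pos (Finset.mem_Icc.1 ha).2, mul_one]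

theorem theta_self (hmob : IsInvOn Set.univ zeta mob) (u : P) : theta mob u u = 1 := by
  simpa [theta, AddMonoidAlgebra.one_def] using sum_Icc_mob_left hmob u u

theorem twist_theta (mob : P → P → ℚ) (u v : P) :
    twist (invertVars P) varUnit (theta mob) u v
      = ∑ a ∈ Icc u v, mob a v • AddMonoidAlgebra.single (tv v - tv a) 1 := by
  simp only [twist, theta, map_sum, Finset.mul_sum, Finset.sum_mul]
  refine Finset.sum_congr rfl fun a _ => ?_
  simp only [AddMonoidAlgebra.smul_single', invertVars_single, varUnit, Units.inv_mk,
    AddMonoidAlgebra.single_mul_single, mul_one, one_mul]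
  congr 1
  abel

theorem sum_twist_theta_mul_theta (hmob : IsInvOn Set.univ zeta mob) (u v : P) :
    ∑ z ∈ Icc u v, twist (invertVars P) varUnit (theta mob) u z * theta mob z v
      = if u = v then 1 else 0 := by
  calc ∑ z ∈ Icc u v, twist (invertVars P) varUnit (theta mob) u z * theta mob z v
      = ∑ z ∈ Icc u v, ∑ a ∈ Icc u z, ∑ b ∈ Icc z v,
          (mob a z * mob b v) • AddMonoidAlgebra.single (tv b - tv a) 1 := by
        simp_rw [twist_theta, theta, Finset.sum_mul, Finset.mul_sum, smul_mul_smul_comm,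
          AddMonoidAlgebra.single_mul_single, sub_add_sub_cancel', one_mul]
    _ = ∑ a ∈ Icc u v, ∑ b ∈ Icc a v, ∑ z ∈ Icc a b,
          (mob a z * mob b v) • AddMonoidAlgebra.single (tv b - tv a) 1 := by
        rw [← sum_Icc_sum_Icc_comm]
        exact Finset.sum_congr rfl fun a _ => sum_Icc_sum_Icc_comm _ a v
    _ = ∑ a ∈ Icc u v, mob a v • (1 : AP P) := by
        refine Finset.sum_congr rfl fun a ha => ?_
        simp_rw [← Finset.sum_smul, ← Finset.sum_mul, sum_Icc_mob_right hmob, ite_mul, one_mul,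
          zero_mul, ite_smul, zero_smul, Finset.sum_ite_eq]
        simp [(Finset.mem_Icc.1 ha).2, AddMonoidAlgebra.one_def]
    _ = if u = v then 1 else 0 := by
        rw [← Finset.sum_smul, sum_Icc_mob_left hmob]
        split_ifs <;> simp

end Theta

theorem statement9_general [PartialOrder P] [LocallyFiniteOrder P]
    (x y : P) (hxy : x < y) (Q Q' : Set P)
    (hxQ : x ∈ Q) (hyQ : y ∈ Q) (hxQ' : x ∈ Q') (hyQ' : y ∈ Q')
    (hcompl : ∀ z : P, x < z → z < y → ((z ∈ Q) ↔ ¬ (z ∈ Q')))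
    (mob : P → P → ℚ) (hmob : IsInvOn Set.univ zeta mob)
    (invθ : P → P → AP P) (hinvθ : IsInvOn Q (theta mob) invθ)
    (invθ' : P → P → AP P) (hinvθ' : IsInvOn Q' (theta mob) invθ')
    (M : P →₀ ℤ) :
    (invθ x y).coeff M = - (invθ' x y).coeff (tv y - tv x - M) := by
  have htwist_self : ∀ u, twist (invertVars P) varUnit (theta mob) u u = 1 := fun u => by
    simp [twist, theta_self hmob]
  have hinv := hinvθ.apply_eq_neg_of_complement (hinvθ'.map_twist (invertVars P) varUnit)
    htwist_self (fun u v _ => sum_twist_theta_mul_theta hmob u v) hxy hxQ hyQ hxQ' hyQ' hcompl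
  rw [hinv, twist, AddMonoidAlgebra.coeff_neg, Finsupp.neg_apply]
  simp only [varUnit, Units.inv_mk, AddMonoidAlgebra.coeff_mul_single_apply,
    AddMonoidAlgebra.coeff_single_mul_apply, coeff_invertVars, one_mul, mul_one]
  congr 2
  abel

/-- let `x < y` in `P` and let `Q, Q' ⊆ P` complement the interval `[x,y]_P`.
Let `m` be an `[x,y]_Q`-admissible monomial (with exponent vector
`M = Σ_i (tv (w i) - tv (z i))`) such that `m⁻¹ · t_y/t_x` (with exponent vector
`tv y - tv x - M`) is `[x,y]_{Q'}`-admissible.  Then the coefficient of `m` in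
`Inv_Q θ (x,y)` is the negative of the coefficient of `m⁻¹ · t_y/t_x` in `Inv_{Q'} θ (x,y)`.
Here `mob` is the Möbius function of `P` and `invθ`, `invθ'` represent `Inv_Q θ`,
`Inv_{Q'} θ`. -/
theorem statement9 [PartialOrder P] [LocallyFiniteOrder P]
    (x y : P) (hxy : x < y) (Q Q' : Set P)
    (hxQ : x ∈ Q) (hyQ : y ∈ Q) (hxQ' : x ∈ Q') (hyQ' : y ∈ Q')
    (hcompl : ∀ z : P, x < z → z < y → ((z ∈ Q) ↔ ¬ (z ∈ Q')))
    (mob : P → P → ℚ) (hmob : IsInvOn Set.univ zeta mob)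
    (invθ : P → P → AP P) (hinvθ : IsInvOn Q (theta mob) invθ)
    (invθ' : P → P → AP P) (hinvθ' : IsInvOn Q' (theta mob) invθ')
    (M : P →₀ ℤ)
    (hM : AdmissibleExp {z | z ∈ Q ∧ x ≤ z ∧ z ≤ y} y M)
    (hM' : AdmissibleExp {z | z ∈ Q' ∧ x ≤ z ∧ z ≤ y} y (tv y - tv x - M)) :
    (invθ x y).coeff M = - (invθ' x y).coeff (tv y - tv x - M) :=
  statement9_general x y hxy Q Q' hxQ hyQ hxQ' hyQ' hcompl mob hmob invθ hinvθ invθ' hinvθ' M
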